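/- arXiv:1303.0154 — 4 statements merged into one kernel-verified Lean document; each statement's English description precedes it below -/
import Mathlib

section
/- If A is Hurwitz and the pair (A, B) is controllable (the controllability matrix [B, AB, ..., A^{n-1}B] has full row rank), then the unique solution P of A P + P Aᵀ + B Bᵀ = 0 is positive definite. -/
/-!
Fix `x` and put `h t = xᵀ e^{tA} P e^{tAᵀ} x`. By the Lyapunov equation
`h' t = -‖xᵀ e^{tA} B‖²`, and `h t → 0` because `e^{tA} → 0` for Hurwitz `A` (on a generalized
eigenspace for `μ`, `e^{tA}` acts as `e^{tμ}` times a polynomial in `t`). So `h` decreases to `0`,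
whence `xᵀ P x = h 0 ≥ 0`; if `h 0 = 0` then `xᵀ e^{tA} B = 0` for all `t > 0`, and differentiating
at `t > 0` and letting `t → 0` gives `xᵀ A^k B = 0` for every `k`, so `x = 0` by controllability.
Symmetry of `P` comes from uniqueness: if `A D + D Aᵀ = 0` then `e^{tA} D e^{tAᵀ}` is constant and
tends to `0`, so `D = Pᵀ - P` vanishes.
-/

attribute [local instance] Matrix.linftyOpNormedRing Matrix.linftyOpNormedAlgebra

open Matrix NormedSpace Filter Topology
open scoped Nat

variable {ι : Type*} [Fintype ι] [DecidableEq ι]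

theorem HasDerivAt.dotProduct_mulVec {𝕜 : Type*} [NontriviallyNormedField 𝕜] [CompleteSpace 𝕜]
    {U : 𝕜 → Matrix ι ι 𝕜} {U' : Matrix ι ι 𝕜} {t : 𝕜} (hU : HasDerivAt U U' t) (x v : ι → 𝕜) :
    HasDerivAt (fun s => x ⬝ᵥ (U s *ᵥ v)) (x ⬝ᵥ (U' *ᵥ v)) t :=
  (dotProductBilin 𝕜 𝕜 x ∘ₗ (mulVecBilin 𝕜 𝕜).flip v).toContinuousLinearMap.hasFDerivAt
    |>.comp_hasDerivAt t hU

theorem Matrix.vecMul_injective_of_rank_eq {K m ν : Type*} [Field K] [Fintype m] [Fintype ν]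
    {C : Matrix m ν K} (hC : C.rank = Fintype.card m) : Function.Injective C.vecMul :=
  vecMul_injective_iff.mpr <| linearIndependent_iff_card_eq_finrank_span.mpr <| by
    rw [Set.finrank, ← rank_eq_finrank_span_row, hC]

theorem HasDerivAt.eq_zero_of_eventuallyEq_const {E : Type*} [NormedAddCommGroup E]
    [NormedSpace ℝ E] {f : ℝ → E} {f' c : E} {t : ℝ} (hf : HasDerivAt f f' t)
    (h : f =ᶠ[𝓝 t] fun _ => c) : f' = 0 :=
  hf.unique ((hasDerivAt_const t c).congr_of_eventuallyEq h)

section DecreasingToZero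

variable {h q : ℝ → ℝ}

theorem nonneg_of_hasDerivAt_neg (hh : ∀ t, HasDerivAt h (-q t) t) (hq : ∀ t, 0 ≤ q t)
    (hlim : Tendsto h atTop (𝓝 0)) (t : ℝ) : 0 ≤ h t :=
  (antitone_of_hasDerivAt_nonpos hh fun s => neg_nonpos.mpr (hq s)).le_of_tendsto hlim t

theorem eq_zero_of_forall_pos_of_hasDerivAt_neg (hh : ∀ t, HasDerivAt h (-q t) t)
    (hq : ∀ t, 0 ≤ q t) (hlim : Tendsto h atTop (𝓝 0)) (h0 : h 0 = 0) {t : ℝ} (ht : 0 < t) :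
    q t = 0 := by
  have hanti : Antitone h := antitone_of_hasDerivAt_nonpos hh fun s => neg_nonpos.mpr (hq s)
  have hvanish : ∀ s > 0, h s = 0 := fun s hs =>
    le_antisymm (h0 ▸ hanti hs.le) (nonneg_of_hasDerivAt_neg hh hq hlim s)
  exact neg_eq_zero.mp <|
    (hh t).eq_zero_of_eventuallyEq_const (eventually_of_mem (Ioi_mem_nhds ht) hvanish)

end DecreasingToZero

namespace Matrix

theorem exp_smul_mulVec_eq_sum_of_pow_mulVec_eq_zero {𝕜 : Type*} [RCLike 𝕜]
    {N : Matrix ι ι 𝕜} {w : ι → 𝕜} {k : ℕ} (hk : N ^ k *ᵥ w = 0) (t : 𝕜) :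
    exp (t • N) *ᵥ w = ∑ j ∈ Finset.range k, (t ^ j / j !) • (N ^ j *ᵥ w) := by
  have hsum := (exp_series_hasSum_exp' (𝕂 := 𝕜) (t • N)).mapL
    ((mulVecBilin 𝕜 𝕜).flip w).toContinuousLinearMap
  refine hsum.unique (hasSum_sum_of_ne_finset_zero fun j hj => ?_) |>.trans
    (Finset.sum_congr rfl fun j _ => ?_)
  · have hNj : N ^ j *ᵥ w = 0 := by
      rw [← Nat.sub_add_cancel (not_lt.mp (Finset.mem_range.not.mp hj)), pow_add,
        ← mulVec_mulVec, hk, mulVec_zero]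
    simp [smul_pow, hNj]
  · simp [smul_pow, smul_smul, div_eq_inv_mul]

theorem exp_smul_mulVec_eq_sum_of_pow_sub_smul_one_mulVec_eq_zero {A : Matrix ι ι ℂ} {μ : ℂ}
    {w : ι → ℂ} {k : ℕ} (hk : (A - μ • 1) ^ k *ᵥ w = 0) (t : ℂ) :
    exp (t • A) *ᵥ w =
      ∑ j ∈ Finset.range k, (Complex.exp (t * μ) * (t ^ j / j !)) • ((A - μ • 1) ^ j *ᵥ w) := by
  have hsplit : t • A = algebraMap ℂ _ (t * μ) + t • (A - μ • 1) := by
    rw [Algebra.algebraMap_eq_smul_one, smul_sub, smul_smul]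
    abel
  have hscalar : exp (algebraMap ℂ (Matrix ι ι ℂ) (t * μ)) = Complex.exp (t * μ) • 1 := by
    rw [Complex.exp_eq_exp_ℂ, ← Algebra.algebraMap_eq_smul_one]
    exact (algebraMap_exp_comm _).symm
  rw [hsplit, Matrix.exp_add_of_commute _ _ (Algebra.commute_algebraMap_left _ _), hscalar,
    smul_mul_assoc, one_mul, smul_mulVec, exp_smul_mulVec_eq_sum_of_pow_mulVec_eq_zero hk,
    Finset.smul_sum]
  simp only [smul_smul]

theorem tendsto_exp_smul_mulVec_of_mem_maxGenEigenspace {A : Matrix ι ι ℂ} {μ : ℂ}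
    (hμ : μ.re < 0) {w : ι → ℂ} (hw : w ∈ Module.End.maxGenEigenspace (toLin' A) μ) :
    Tendsto (fun t : ℝ => exp (t • A) *ᵥ w) atTop (𝓝 0) := by
  obtain ⟨k, hk⟩ := (Module.End.mem_maxGenEigenspace _ μ w).mp hw
  have hk' : (A - μ • 1) ^ k *ᵥ w = 0 := by
    simpa [← toLin'_apply, toLin'_pow, Module.End.one_eq_id] using hk
  simp_rw [RCLike.real_smul_eq_coe_smul (K := ℂ),
    exp_smul_mulVec_eq_sum_of_pow_sub_smul_one_mulVec_eq_zero hk']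
  rw [← Finset.sum_const_zero (s := Finset.range k)]
  refine tendsto_finsetSum _ fun j _ => ?_
  rw [← zero_smul ℂ ((A - μ • 1) ^ j *ᵥ w)]
  refine Tendsto.smul_const ?_ _
  rw [tendsto_zero_iff_norm_tendsto_zero]
  have hpoly := (tendsto_rpow_mul_exp_neg_mul_atTop_nhds_zero j (-μ.re) (by linarith)).div_const
    (j ! : ℝ)
  rw [zero_div] at hpoly
  refine hpoly.congr' ?_
  filter_upwards [eventually_ge_atTop 0] with t ht
  simp [Complex.norm_exp, abs_of_nonneg ht, Real.rpow_natCast]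
  rw [mul_comm t μ.re]
  ring

theorem tendsto_exp_smul_mulVec_of_forall_re_neg {A : Matrix ι ι ℂ}
    (hA : ∀ z ∈ spectrum ℂ A, z.re < 0) (v : ι → ℂ) :
    Tendsto (fun t : ℝ => exp (t • A) *ᵥ v) atTop (𝓝 0) := by
  have hv : v ∈ ⨆ μ, Module.End.maxGenEigenspace (toLin' A) μ := by
    rw [Module.End.iSup_maxGenEigenspace_eq_top]; trivial
  refine Submodule.iSup_induction _
    (motive := fun w => Tendsto (fun t : ℝ => exp (t • A) *ᵥ w) atTop (𝓝 0)) hv ?_ ?_ ?_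
  · intro μ w hw
    rcases eq_or_ne w 0 with rfl | hw0
    · simp
    refine tendsto_exp_smul_mulVec_of_mem_maxGenEigenspace (hA μ ?_) hw
    obtain ⟨k, hk⟩ := (Module.End.mem_maxGenEigenspace _ μ w).mp hw
    rw [← spectrum_toLin']
    exact (Module.End.hasEigenvalue_of_hasGenEigenvalue (k := k) ((Submodule.ne_bot_iff _).mpr
      ⟨w, Module.End.mem_genEigenspace_nat.mpr (LinearMap.mem_ker.mpr hk), hw0⟩)).mem_spectrum
  · simp
  · intro w₁ w₂ h₁ h₂
    simpa [mulVec_add] using h₁.add h₂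

theorem map_exp_smul (A : Matrix ι ι ℝ) (t : ℝ) :
    (exp (t • A)).map (algebraMap ℝ ℂ) = exp (t • A.map (algebraMap ℝ ℂ)) := by
  have h := map_exp ((algebraMap ℝ ℂ).mapMatrix (m := ι))
    (Continuous.matrix_map continuous_id Complex.continuous_ofReal) (t • A)
  have hsmul : (t • A).map (algebraMap ℝ ℂ) = t • A.map (algebraMap ℝ ℂ) := by ext; simp
  rwa [RingHom.mapMatrix_apply, RingHom.mapMatrix_apply, hsmul] at h

theorem tendsto_exp_smul_atTop_nhds_zero {A : Matrix ι ι ℝ}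
    (hA : ∀ z ∈ spectrum ℂ (A.map (algebraMap ℝ ℂ)), z.re < 0) :
    Tendsto (fun t : ℝ => exp (t • A)) atTop (𝓝 0) := by
  have hC : Tendsto (fun t : ℝ => exp (t • A.map (algebraMap ℝ ℂ))) atTop (𝓝 0) := by
    refine tendsto_pi_nhds.mpr fun i => tendsto_pi_nhds.mpr fun j => ?_
    have := tendsto_pi_nhds.mp (tendsto_exp_smul_mulVec_of_forall_re_neg hA (Pi.single j 1)) i
    simpa [mulVec_single_one] using this
  have hre : ∀ t : ℝ, exp (t • A) = (exp (t • A.map (algebraMap ℝ ℂ))).map Complex.re := by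
    intro t
    calc exp (t • A) = ((exp (t • A)).map (algebraMap ℝ ℂ)).map Complex.re := by ext; simp
      _ = _ := congrArg (Matrix.map · Complex.re) (map_exp_smul A t)
  simp_rw [hre]
  simpa [Function.comp_def] using
    ((Continuous.matrix_map continuous_id Complex.continuous_re).tendsto 0).comp hC

variable {A : Matrix ι ι ℝ}

noncomputable def lyapunovFlow (A M : Matrix ι ι ℝ) (t : ℝ) : Matrix ι ι ℝ :=
  exp (t • A) * M * exp (t • Aᵀ)

theorem lyapunovFlow_zero (A M : Matrix ι ι ℝ) : lyapunovFlow A M 0 = M := by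
  simp [lyapunovFlow]

theorem hasDerivAt_lyapunovFlow (A M : Matrix ι ι ℝ) (t : ℝ) :
    HasDerivAt (lyapunovFlow A M) (lyapunovFlow A (A * M + M * Aᵀ) t) t := by
  refine (((hasDerivAt_exp_smul_const' A t).mul_const M).mul
    (hasDerivAt_exp_smul_const' Aᵀ t)).congr_deriv ?_
  have hcomm : A * exp (t • A) = exp (t • A) * A := ((Commute.refl A).smul_right t).exp_right.eq
  show A * exp (t • A) * M * exp (t • Aᵀ) + exp (t • A) * M * (Aᵀ * exp (t • Aᵀ)) = _
  rw [lyapunovFlow, hcomm]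
  noncomm_ring

theorem tendsto_lyapunovFlow (hA : ∀ z ∈ spectrum ℂ (A.map (algebraMap ℝ ℂ)), z.re < 0)
    (M : Matrix ι ι ℝ) : Tendsto (lyapunovFlow A M) atTop (𝓝 0) := by
  have hE := tendsto_exp_smul_atTop_nhds_zero hA
  have hET : Tendsto (fun t : ℝ => exp (t • Aᵀ)) atTop (𝓝 0) := by
    simp_rw [← transpose_smul, exp_transpose]
    simpa [Function.comp_def] using (continuous_id.matrix_transpose.tendsto 0).comp hE
  show Tendsto (fun t : ℝ => exp (t • A) * M * exp (t • Aᵀ)) atTop (𝓝 0)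
  simpa using (hE.mul_const M).mul hET

theorem eq_zero_of_mul_add_mul_transpose_eq_zero
    (hA : ∀ z ∈ spectrum ℂ (A.map (algebraMap ℝ ℂ)), z.re < 0) {D : Matrix ι ι ℝ}
    (hD : A * D + D * Aᵀ = 0) : D = 0 := by
  have hconst := is_const_of_deriv_eq_zero
    (fun t => (hasDerivAt_lyapunovFlow A D t).differentiableAt)
    (fun t => by simp [(hasDerivAt_lyapunovFlow A D t).deriv, hD, lyapunovFlow])
  have hflow : lyapunovFlow A D = fun _ => D :=
    funext fun t => (hconst t 0).trans (lyapunovFlow_zero A D)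
  exact tendsto_nhds_unique tendsto_const_nhds (hflow ▸ tendsto_lyapunovFlow hA D)

theorem isSymm_of_mul_add_mul_transpose_add_eq_zero
    (hA : ∀ z ∈ spectrum ℂ (A.map (algebraMap ℝ ℂ)), z.re < 0) {P Q : Matrix ι ι ℝ}
    (hQ : Q.IsSymm) (hP : A * P + P * Aᵀ + Q = 0) : P.IsSymm := by
  have hPT : A * Pᵀ + Pᵀ * Aᵀ + Q = 0 := by
    rw [add_comm (A * Pᵀ)]
    simpa [transpose_add, transpose_mul, hQ.eq] using congrArg transpose hP
  refine sub_eq_zero.mp (eq_zero_of_mul_add_mul_transpose_eq_zero hA ?_)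
  calc A * (Pᵀ - P) + (Pᵀ - P) * Aᵀ = (A * Pᵀ + Pᵀ * Aᵀ + Q) - (A * P + P * Aᵀ + Q) := by
        noncomm_ring
    _ = 0 := by rw [hPT, hP, sub_zero]

theorem dotProduct_lyapunovFlow_mul_transpose_mulVec {κ : Type*} [Fintype κ] (A : Matrix ι ι ℝ)
    (B : Matrix ι κ ℝ) (x : ι → ℝ) (t : ℝ) :
    x ⬝ᵥ (lyapunovFlow A (B * Bᵀ) t *ᵥ x) =
      (x ᵥ* (exp (t • A) * B)) ⬝ᵥ (x ᵥ* (exp (t • A) * B)) := by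
  have hfactor : exp (t • A) * (B * Bᵀ) * (exp (t • A))ᵀ =
      exp (t • A) * B * (exp (t • A) * B)ᵀ := by
    rw [transpose_mul, Matrix.mul_assoc, Matrix.mul_assoc, Matrix.mul_assoc]
  rw [lyapunovFlow, ← transpose_smul, exp_transpose, hfactor, ← mulVec_mulVec, dotProduct_mulVec,
    mulVec_transpose]

theorem dotProduct_pow_mulVec_eq_zero_of_forall_pos (A : Matrix ι ι ℝ) {x u : ι → ℝ}
    (h : ∀ t : ℝ, 0 < t → x ⬝ᵥ (exp (t • A) *ᵥ u) = 0) (k : ℕ) : x ⬝ᵥ (A ^ k *ᵥ u) = 0 := by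
  have hderiv : ∀ u t, HasDerivAt (fun s : ℝ => x ⬝ᵥ (exp (s • A) *ᵥ u))
      (x ⬝ᵥ ((exp (t • A) * A) *ᵥ u)) t := fun u t =>
    (hasDerivAt_exp_smul_const A t).dotProduct_mulVec x u
  have hpow : ∀ k : ℕ, ∀ t : ℝ, 0 < t → x ⬝ᵥ (exp (t • A) *ᵥ (A ^ k *ᵥ u)) = 0 := by
    intro k
    induction k with
    | zero => simpa using h
    | succ k ih =>
      intro t ht
      rw [_root_.pow_succ', ← mulVec_mulVec, mulVec_mulVec]
      exact (hderiv (A ^ k *ᵥ u) t).eq_zero_of_eventuallyEq_const (c := 0)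
        (eventually_of_mem (Ioi_mem_nhds ht) fun s hs => ih s hs)
  have hcont : Continuous fun s : ℝ => x ⬝ᵥ (exp (s • A) *ᵥ (A ^ k *ᵥ u)) :=
    continuous_iff_continuousAt.mpr fun t => (hderiv _ t).continuousAt
  have h0 : (0 : ℝ) ∈ closure (Set.Ioi 0) := by simp
  simpa using
    (isClosed_eq hcont continuous_const).closure_subset_iff.mpr (fun t ht => hpow k t ht) h0

theorem vecMul_pow_mul_eq_zero_of_forall_pos {κ : Type*} [Fintype κ] (A : Matrix ι ι ℝ)
    {C : Matrix ι κ ℝ} {x : ι → ℝ} (h : ∀ t : ℝ, 0 < t → x ᵥ* (exp (t • A) * C) = 0) (k : ℕ) :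
    x ᵥ* (A ^ k * C) = 0 := by
  classical
  funext p
  have hcol := dotProduct_pow_mulVec_eq_zero_of_forall_pos A (u := C *ᵥ Pi.single p 1)
    (fun t ht => by rw [mulVec_mulVec, dotProduct_mulVec, h t ht, zero_dotProduct]) k
  rwa [mulVec_mulVec, dotProduct_mulVec, dotProduct_single, mul_one] at hcol

end Matrix

open MeasureTheory Matrix NormedSpace in
theorem stmt7_general (n m : ℕ) (A : Matrix (Fin n) (Fin n) ℝ) (B : Matrix (Fin n) (Fin m) ℝ)
    (hA : ∀ z ∈ spectrum ℂ (A.map (algebraMap ℝ ℂ)), z.re < 0)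
    (hctrb : (Matrix.of fun i (p : Fin n × Fin m) => (A ^ (p.1 : ℕ) * B) i p.2 :
        Matrix (Fin n) (Fin n × Fin m) ℝ).rank = n)
    (P : Matrix (Fin n) (Fin n) ℝ)
    (hLyap : A * P + P * Aᵀ + B * Bᵀ = 0) :
    P.PosDef := by
  have hsymm := isSymm_of_mul_add_mul_transpose_add_eq_zero hA
    (by simp [IsSymm, transpose_mul]) hLyap
  refine .of_dotProduct_mulVec_pos (isHermitian_iff_isSymm.mpr hsymm) fun x hx => ?_
  rw [star_trivial]
  set h : ℝ → ℝ := fun t => x ⬝ᵥ (lyapunovFlow A P t *ᵥ x)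
  set y : ℝ → Fin m → ℝ := fun t => x ᵥ* (exp (t • A) * B)
  have hderiv : ∀ t, HasDerivAt h (-(y t ⬝ᵥ y t)) t := fun t => by
    refine ((hasDerivAt_lyapunovFlow A P t).dotProduct_mulVec x x).congr_deriv ?_
    rw [eq_neg_of_add_eq_zero_left hLyap, ← dotProduct_lyapunovFlow_mul_transpose_mulVec]
    simp [lyapunovFlow, neg_mulVec]
  have hq : ∀ t, 0 ≤ y t ⬝ᵥ y t := fun t => by simpa using dotProduct_self_star_nonneg (y t)
  have hlim : Tendsto h atTop (𝓝 0) := by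
    have hcont : Continuous fun M : Matrix (Fin n) (Fin n) ℝ => x ⬝ᵥ (M *ᵥ x) :=
      continuous_const.dotProduct (continuous_id.matrix_mulVec continuous_const)
    simpa [Function.comp_def, h] using (hcont.tendsto 0).comp (tendsto_lyapunovFlow hA P)
  have h0 : h 0 = x ⬝ᵥ (P *ᵥ x) := by simp [h, lyapunovFlow_zero]
  refine (h0 ▸ nonneg_of_hasDerivAt_neg hderiv hq hlim 0).lt_of_ne' fun hzero => hx ?_
  have hy : ∀ t : ℝ, 0 < t → y t = 0 := fun t ht => dotProduct_self_eq_zero.mp <|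
    eq_zero_of_forall_pos_of_hasDerivAt_neg hderiv hq hlim (h0.trans hzero) ht
  have hAkB := vecMul_pow_mul_eq_zero_of_forall_pos A hy
  refine vecMul_injective_of_rank_eq (by simpa using hctrb) ?_
  ext ⟨k, p⟩
  simpa [vecMul, dotProduct] using congrFun (hAkB k) p

open MeasureTheory Matrix NormedSpace in
/-- If `A` is Hurwitz and `(A, B)` is controllable (the controllability matrix
`[B, AB, …, A^{n-1}B]` has full row rank `n`), then the unique solution
`P = ∫₀^∞ e^{tA} B Bᵀ e^{tAᵀ} dt` of the Lyapunov equation `A P + P Aᵀ + B Bᵀ = 0`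
is positive definite. -/
theorem stmt7 (n m : ℕ) (A : Matrix (Fin n) (Fin n) ℝ) (B : Matrix (Fin n) (Fin m) ℝ)
    (hA : ∀ z ∈ spectrum ℂ (A.map (algebraMap ℝ ℂ)), z.re < 0)
    (hctrb : (Matrix.of fun i (p : Fin n × Fin m) => (A ^ (p.1 : ℕ) * B) i p.2 :
        Matrix (Fin n) (Fin n × Fin m) ℝ).rank = n)
    (P : Matrix (Fin n) (Fin n) ℝ)
    (hP : ∀ i j, P i j =
      ∫ t in Set.Ioi (0 : ℝ),
        (NormedSpace.exp (t • A) * B * Bᵀ * NormedSpace.exp (t • Aᵀ)) i j)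
    (hLyap : A * P + P * Aᵀ + B * Bᵀ = 0) :
    P.PosDef :=
  stmt7_general n m A B hA hctrb P hLyap
end

section
/- If P is a symmetric positive definite solution of the Riccati equation A P + P Aᵀ + G R Gᵀ − P Hᵀ(JSJᵀ)⁻¹ H P = 0 with R > 0 and (A, G) controllable, then A − P Hᵀ(JSJᵀ)⁻¹ H is Hurwitz. -/
/-!
Put `F = A - c⁻¹ P Hᵀ H`. The Riccati equation says that `F` solves the Lyapunov equation
`F P + P Fᵀ + R G Gᵀ + c⁻¹ (P Hᵀ) (P Hᵀ)ᵀ = 0`. Pairing it with an eigenvector `x` of `Fᴴ` for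
the eigenvalue `z` gives `2 Re z · x⋆ P x = -(R ‖Gᴴ x‖² + c⁻¹ ‖H P x‖²)`, so `Re z ≤ 0` because
`P` is positive definite. If `Re z = 0`, then `Gᴴ x = 0` and `H P x = 0`, hence `Aᴴ x = z x`, so
`x` is orthogonal to every column of every `Aᵏ G`; controllability forces `x = 0`
(the Popov–Belevitch–Hautus test).
-/

open scoped ComplexOrder

namespace Matrix

variable {ι m : Type*} [Fintype ι]

theorem exists_transpose_mulVec_eq_smul_of_mem_spectrum {K : Type*} [Field K] [DecidableEq ι]
    {M : Matrix ι ι K} {z : K} (hz : z ∈ spectrum K M) : ∃ x ≠ 0, Mᵀ *ᵥ x = z • x := by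
  have hdet : (algebraMap K (Matrix ι ι K) z - M).det = 0 := by
    by_contra h
    exact spectrum.mem_iff.mp hz ((isUnit_iff_isUnit_det _).mpr (isUnit_iff_ne_zero.mpr h))
  obtain ⟨x, hx, hxM⟩ := exists_vecMul_eq_zero_iff.mpr hdet
  refine ⟨x, hx, ?_⟩
  rw [vecMul_sub, Algebra.algebraMap_eq_smul_one, vecMul_smul, vecMul_one, sub_eq_zero] at hxM
  rw [mulVec_transpose, hxM]

theorem eq_zero_of_vecMul_eq_zero_of_rank_eq_card {K : Type*} [Field K] [Fintype m]
    {M : Matrix m ι K} (hM : M.rank = Fintype.card m) {u : m → K} (hu : u ᵥ* M = 0) :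
    u = 0 := by
  have hsurj : Function.Surjective M.mulVecLin := by
    rw [← LinearMap.range_eq_top]
    apply Submodule.eq_top_of_finrank_eq
    rw [show Module.finrank K (LinearMap.range M.mulVecLin) = M.rank from rfl, hM,
      Module.finrank_fintype_fun_eq_card]
  refine dotProduct_eq_zero_iff.mp fun y => ?_
  obtain ⟨x, rfl⟩ := hsurj y
  rw [mulVecLin_apply, dotProduct_mulVec, hu, zero_dotProduct]

def ctrbMatrix {K : Type*} [Semiring K] [Fintype m] {n : ℕ} (A : Matrix (Fin n) (Fin n) K)
    (G : Matrix (Fin n) m K) : Matrix (Fin n) (Fin n × m) K :=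
  of fun i p => (A ^ (p.1 : ℕ) * G) i p.2

theorem conjTranspose_map_algebraMap_real {n : Type*} (M : Matrix m n ℝ) :
    (M.map (algebraMap ℝ ℂ))ᴴ = (M.map (algebraMap ℝ ℂ))ᵀ := by
  rw [← conjTranspose_map _ fun _ => by simp, conjTranspose_eq_transpose_of_trivial, transpose_map]

theorem map_algebraMap_smul {R S n : Type*} [CommSemiring R] [Semiring S] [Algebra R S] (r : R)
    (M : Matrix m n R) : (r • M).map (algebraMap R S) = r • M.map (algebraMap R S) := by
  ext
  simp [Algebra.smul_def]

theorem re_vecMul_map_algebraMap [Fintype m] {n : Type*} (M : Matrix m n ℝ) (v : m → ℂ) (j : n) :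
    ((v ᵥ* M.map (algebraMap ℝ ℂ)) j).re = ((fun i => (v i).re) ᵥ* M) j := by
  simp [vecMul, dotProduct, Complex.re_sum]

theorem im_vecMul_map_algebraMap [Fintype m] {n : Type*} (M : Matrix m n ℝ) (v : m → ℂ) (j : n) :
    ((v ᵥ* M.map (algebraMap ℝ ℂ)) j).im = ((fun i => (v i).im) ᵥ* M) j := by
  simp [vecMul, dotProduct, Complex.im_sum]

theorem eq_zero_of_vecMul_map_algebraMap_eq_zero {n : Type*} [Fintype m] [Fintype n]
    {M : Matrix m n ℝ} (hM : M.rank = Fintype.card m) {v : m → ℂ}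
    (hv : v ᵥ* M.map (algebraMap ℝ ℂ) = 0) : v = 0 := by
  have hre : (fun i => (v i).re) = 0 := eq_zero_of_vecMul_eq_zero_of_rank_eq_card hM <|
    funext fun j => by rw [← re_vecMul_map_algebraMap, hv]; rfl
  have him : (fun i => (v i).im) = 0 := eq_zero_of_vecMul_eq_zero_of_rank_eq_card hM <|
    funext fun j => by rw [← im_vecMul_map_algebraMap, hv]; rfl
  funext i
  exact Complex.ext (congrFun hre i) (congrFun him i)

theorem eq_zero_of_forall_conjTranspose_mulVec_eq_zero_of_rank_ctrbMatrix [Fintype m] {n : ℕ}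
    {A : Matrix (Fin n) (Fin n) ℝ} {G : Matrix (Fin n) m ℝ} (hctrb : (ctrbMatrix A G).rank = n)
    (x : Fin n → ℂ)
    (hx : ∀ k : ℕ, (A.map (algebraMap ℝ ℂ) ^ k * G.map (algebraMap ℝ ℂ))ᴴ *ᵥ x = 0) : x = 0 := by
  have hv : star x ᵥ* (ctrbMatrix A G).map (algebraMap ℝ ℂ) = 0 := by
    funext p
    have h := congrArg star (hx p.1)
    rw [star_mulVec, conjTranspose_conjTranspose, ← Matrix.map_pow, ← Matrix.map_mul,
      star_zero] at h
    exact congrFun h p.2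
  rw [← star_eq_zero]
  exact eq_zero_of_vecMul_map_algebraMap_eq_zero (by rwa [Fintype.card_fin]) hv

theorem re_star_dotProduct_map_algebraMap_mulVec (M : Matrix ι ι ℝ) (x : ι → ℂ) :
    (star x ⬝ᵥ M.map (algebraMap ℝ ℂ) *ᵥ x).re =
      (fun i => (x i).re) ⬝ᵥ M *ᵥ (fun i => (x i).re) +
        (fun i => (x i).im) ⬝ᵥ M *ᵥ (fun i => (x i).im) := by
  simp only [dotProduct, mulVec, Complex.re_sum, ← Finset.sum_add_distrib, Finset.mul_sum]
  refine Finset.sum_congr rfl fun i _ => Finset.sum_congr rfl fun j _ => ?_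
  simp

theorem PosDef.map_algebraMap_complex {P : Matrix ι ι ℝ} (hP : P.PosDef) :
    (P.map (algebraMap ℝ ℂ)).PosDef := by
  have hherm : (P.map (algebraMap ℝ ℂ)).IsHermitian := by
    rw [IsHermitian, conjTranspose_map_algebraMap_real, ← transpose_map,
      ← conjTranspose_eq_transpose_of_trivial, hP.isHermitian.eq]
  refine .of_dotProduct_mulVec_pos hherm fun x hx => ?_
  refine Complex.pos_iff.mpr ⟨?_, (hherm.im_star_dotProduct_mulVec_self x).symm⟩
  rw [re_star_dotProduct_map_algebraMap_mulVec]
  have hpos : ∀ u : ι → ℝ, u ≠ 0 → 0 < u ⬝ᵥ P *ᵥ u := fun u hu => by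
    simpa using hP.dotProduct_mulVec_pos hu
  have hnonneg : ∀ u : ι → ℝ, 0 ≤ u ⬝ᵥ P *ᵥ u := fun u => by
    simpa using hP.posSemidef.dotProduct_mulVec_nonneg u
  by_cases hre : (fun i => (x i).re) = 0
  · have him : (fun i => (x i).im) ≠ 0 := fun him =>
      hx (funext fun i => Complex.ext (congrFun hre i) (congrFun him i))
    linarith [hnonneg (fun i => (x i).re), hpos _ him]
  · linarith [hpos _ hre, hnonneg (fun i => (x i).im)]

theorem riccati_map_algebraMap {p : Type*} [Fintype m] [Fintype p]
    {A P : Matrix ι ι ℝ} {G : Matrix ι m ℝ} {H : Matrix p ι ℝ} {R c : ℝ}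
    (hric : A * P + P * Aᵀ + R • (G * Gᵀ) - c⁻¹ • (P * Hᵀ * H * P) = 0) :
    A.map (algebraMap ℝ ℂ) * P.map (algebraMap ℝ ℂ) +
        P.map (algebraMap ℝ ℂ) * (A.map (algebraMap ℝ ℂ))ᴴ +
        R • (G.map (algebraMap ℝ ℂ) * (G.map (algebraMap ℝ ℂ))ᴴ) -
        c⁻¹ • (P.map (algebraMap ℝ ℂ) * (H.map (algebraMap ℝ ℂ))ᴴ * H.map (algebraMap ℝ ℂ) *
          P.map (algebraMap ℝ ℂ)) = 0 := by
  simpa only [Matrix.map_sub _ (map_sub (algebraMap ℝ ℂ)),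
    Matrix.map_add _ (map_add (algebraMap ℝ ℂ)), map_algebraMap_smul, Matrix.map_mul,
    transpose_map, conjTranspose_map_algebraMap_real, Matrix.map_zero _ (map_zero _)]
    using congrArg (·.map (algebraMap ℝ ℂ)) hric

theorem star_dotProduct_mul_conjTranspose_mulVec {K : Type*} [CommSemiring K] [StarRing K]
    [Fintype m] (B : Matrix ι m K) (x : ι → K) :
    star x ⬝ᵥ (B * Bᴴ) *ᵥ x = star (Bᴴ *ᵥ x) ⬝ᵥ Bᴴ *ᵥ x := by
  rw [← mulVec_mulVec, dotProduct_mulVec, star_mulVec, conjTranspose_conjTranspose]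

theorem conjTranspose_mulVec_eq_zero_of_smul_add_smul {n : Type*} [Fintype m] [Fintype n]
    {a b : ℝ} (ha : 0 < a) (hb : 0 < b) {B : Matrix ι m ℂ} {C : Matrix ι n ℂ} {x : ι → ℂ}
    (h : star x ⬝ᵥ (a • (B * Bᴴ) + b • (C * Cᴴ)) *ᵥ x = 0) :
    Bᴴ *ᵥ x = 0 ∧ Cᴴ *ᵥ x = 0 := by
  rw [add_mulVec, smul_mulVec, smul_mulVec, dotProduct_add, dotProduct_smul, dotProduct_smul,
    star_dotProduct_mul_conjTranspose_mulVec, star_dotProduct_mul_conjTranspose_mulVec,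
    add_eq_zero_iff_of_nonneg (smul_nonneg ha.le (dotProduct_star_self_nonneg _))
      (smul_nonneg hb.le (dotProduct_star_self_nonneg _)),
    smul_eq_zero_iff_right ha.ne', smul_eq_zero_iff_right hb.ne'] at h
  exact ⟨dotProduct_star_self_eq_zero.mp h.1, dotProduct_star_self_eq_zero.mp h.2⟩

theorem star_dotProduct_mulVec_eq_zero_of_lyapunov {F P Q : Matrix ι ι ℂ} (hP : P.PosDef)
    (hQ : Q.PosSemidef) (hlyap : F * P + P * Fᴴ + Q = 0) {x : ι → ℂ} (hx : x ≠ 0) {z : ℂ}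
    (hFx : Fᴴ *ᵥ x = z • x) (hz : 0 ≤ z.re) : star x ⬝ᵥ Q *ᵥ x = 0 := by
  have hxF : star x ᵥ* F = star z • star x := by
    rw [← conjTranspose_conjTranspose F, ← star_mulVec, hFx, star_smul]
  have hQx : star x ⬝ᵥ Q *ᵥ x = -((star z + z) * (star x ⬝ᵥ P *ᵥ x)) := by
    rw [eq_neg_of_add_eq_zero_right hlyap, neg_mulVec, dotProduct_neg, add_mulVec,
      dotProduct_add, ← mulVec_mulVec, ← mulVec_mulVec, dotProduct_mulVec, hxF, hFx,
      smul_dotProduct, mulVec_smul, dotProduct_smul, smul_eq_mul, smul_eq_mul, add_mul]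
  have hzz : 0 ≤ star z + z := by
    rw [add_comm, Complex.star_def, Complex.add_conj, Complex.zero_le_real]
    positivity
  refine le_antisymm ?_ (hQ.dotProduct_mulVec_nonneg x)
  rw [hQx, neg_nonpos]
  exact mul_nonneg hzz (hP.dotProduct_mulVec_pos hx).le

theorem eq_zero_of_conjTranspose_mulVec_eq_smul_of_conjTranspose_mulVec_eq_zero {K : Type*}
    [CommRing K] [StarRing K] [Fintype m] [DecidableEq ι] {A : Matrix ι ι K} {G : Matrix ι m K}
    (hctrb : ∀ x : ι → K, (∀ k : ℕ, (A ^ k * G)ᴴ *ᵥ x = 0) → x = 0) {x : ι → K} {z : K}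
    (hAx : Aᴴ *ᵥ x = z • x) (hGx : Gᴴ *ᵥ x = 0) : x = 0 := by
  have hpow : ∀ k : ℕ, (Aᴴ ^ k) *ᵥ x = z ^ k • x := by
    intro k
    induction k with
    | zero => simp
    | succ k ih => rw [pow_succ, ← mulVec_mulVec, hAx, mulVec_smul, ih, smul_smul, pow_succ']
  refine hctrb x fun k => ?_
  rw [conjTranspose_mul, conjTranspose_pow, ← mulVec_mulVec, hpow, mulVec_smul, hGx, smul_zero]

theorem closedLoop_lyapunov_of_riccati {p : Type*} [Fintype m] [Fintype p]
    {A P : Matrix ι ι ℂ} {G : Matrix ι m ℂ} {H : Matrix p ι ℂ} {R c : ℝ} (hP : P.IsHermitian)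
    (hric : A * P + P * Aᴴ + R • (G * Gᴴ) - c⁻¹ • (P * Hᴴ * H * P) = 0) :
    (A - c⁻¹ • (P * Hᴴ * H)) * P + P * (A - c⁻¹ • (P * Hᴴ * H))ᴴ +
      (R • (G * Gᴴ) + c⁻¹ • (P * Hᴴ * (P * Hᴴ)ᴴ)) = 0 := by
  rw [← hric]
  simp only [sub_mul, mul_sub, conjTranspose_sub, conjTranspose_smul, star_trivial,
    conjTranspose_mul, conjTranspose_conjTranspose, hP.eq, smul_mul, Matrix.mul_smul,
    Matrix.mul_assoc]
  abel

theorem re_lt_zero_of_riccati {p : Type*} [Fintype m] [Fintype p] [DecidableEq ι]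
    {A P : Matrix ι ι ℂ} {G : Matrix ι m ℂ} {H : Matrix p ι ℂ} {R c : ℝ} (hR : 0 < R)
    (hc : 0 < c) (hctrb : ∀ x : ι → ℂ, (∀ k : ℕ, (A ^ k * G)ᴴ *ᵥ x = 0) → x = 0)
    (hP : P.PosDef) (hric : A * P + P * Aᴴ + R • (G * Gᴴ) - c⁻¹ • (P * Hᴴ * H * P) = 0)
    {x : ι → ℂ} (hx : x ≠ 0) {z : ℂ} (hFx : (A - c⁻¹ • (P * Hᴴ * H))ᴴ *ᵥ x = z • x) :
    z.re < 0 := by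
  by_contra! hz
  have hQ : (R • (G * Gᴴ) + c⁻¹ • (P * Hᴴ * (P * Hᴴ)ᴴ)).PosSemidef :=
    ((posSemidef_self_mul_conjTranspose G).smul hR.le).add
      ((posSemidef_self_mul_conjTranspose _).smul (inv_pos.mpr hc).le)
  obtain ⟨hGx, hPHx⟩ := conjTranspose_mulVec_eq_zero_of_smul_add_smul hR (inv_pos.mpr hc) <|
    star_dotProduct_mulVec_eq_zero_of_lyapunov hP hQ
      (closedLoop_lyapunov_of_riccati hP.isHermitian hric) hx hFx hz
  have hAx : Aᴴ *ᵥ x = z • x := by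
    rw [← hFx, conjTranspose_sub, sub_mulVec, conjTranspose_smul, star_trivial, smul_mulVec,
      conjTranspose_mul (P * Hᴴ) H, ← mulVec_mulVec, hPHx, mulVec_zero, smul_zero,
      sub_zero]
  exact hx (eq_zero_of_conjTranspose_mulVec_eq_smul_of_conjTranspose_mulVec_eq_zero hctrb hAx hGx)

end Matrix

open Matrix in
theorem stmt10_general (n : ℕ) (A : Matrix (Fin n) (Fin n) ℝ) (G : Matrix (Fin n) (Fin 1) ℝ)
    (H : Matrix (Fin 1) (Fin n) ℝ) (R c : ℝ) (hR : 0 < R) (hc : 0 < c)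
    (hctrb : (Matrix.of fun i (p : Fin n × Fin 1) => (A ^ (p.1 : ℕ) * G) i p.2 :
        Matrix (Fin n) (Fin n × Fin 1) ℝ).rank = n)
    (P : Matrix (Fin n) (Fin n) ℝ) (hpd : P.PosDef)
    (hric : A * P + P * Aᵀ + R • (G * Gᵀ) - c⁻¹ • (P * Hᵀ * H * P) = 0) :
    ∀ z ∈ spectrum ℂ ((A - c⁻¹ • (P * Hᵀ * H)).map (algebraMap ℝ ℂ)), z.re < 0 := by
  intro z hz
  obtain ⟨x, hx, hFx⟩ := exists_transpose_mulVec_eq_smul_of_mem_spectrum hz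
  refine re_lt_zero_of_riccati hR hc
    (eq_zero_of_forall_conjTranspose_mulVec_eq_zero_of_rank_ctrbMatrix hctrb)
    hpd.map_algebraMap_complex (riccati_map_algebraMap hric) hx ?_
  rwa [← conjTranspose_map_algebraMap_real, Matrix.map_sub _ (map_sub (algebraMap ℝ ℂ)),
    map_algebraMap_smul, Matrix.map_mul, Matrix.map_mul, transpose_map,
    ← conjTranspose_map_algebraMap_real] at hFx

open Matrix in
/-- If `P` is a symmetric positive definite solution of the Riccati equation
`A P + P Aᵀ + R·G Gᵀ − P Hᵀ (JSJᵀ)⁻¹ H P = 0` with `R > 0`, `JSJᵀ = c > 0`, and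
`(A, G)` controllable, then `A − P Hᵀ c⁻¹ H` is Hurwitz. -/
theorem stmt10 (n : ℕ) (A : Matrix (Fin n) (Fin n) ℝ) (G : Matrix (Fin n) (Fin 1) ℝ)
    (H : Matrix (Fin 1) (Fin n) ℝ) (R c : ℝ) (hR : 0 < R) (hc : 0 < c)
    (hctrb : (Matrix.of fun i (p : Fin n × Fin 1) => (A ^ (p.1 : ℕ) * G) i p.2 :
        Matrix (Fin n) (Fin n × Fin 1) ℝ).rank = n)
    (P : Matrix (Fin n) (Fin n) ℝ) (hsym : P.IsSymm) (hpd : P.PosDef)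
    (hric : A * P + P * Aᵀ + R • (G * Gᵀ) - c⁻¹ • (P * Hᵀ * H * P) = 0) :
    ∀ z ∈ spectrum ℂ ((A - c⁻¹ • (P * Hᵀ * H)).map (algebraMap ℝ ℂ)), z.re < 0 :=
  stmt10_general n A G H R c hR hc hctrb P hpd hric
end

section
/- Suppose Q̃ is symmetric PSD and satisfies A Q̃ + Q̃ Aᵀ + ε Q̃ E₁ᵀE₁ Q̃ − Q̃ Hᵀ(JSJᵀ)⁻¹H Q̃ + (1/ε) D₁D₁ᵀ + G R Gᵀ = 0 with ε > 0. Then for every Δ with ‖Δ‖ ≤ 1, the perturbed matrix A_Δ := A + D₁ΔE₁ satisfies A_Δ Q̃ + Q̃ A_Δᵀ + G R Gᵀ − Q̃ Hᵀ(JSJᵀ)⁻¹H Q̃ ≤ 0 in the Loewner order. -/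
open Matrix in
/-- If symmetric PSD `Q̃` satisfies the robust Riccati equation
`A Q̃ + Q̃ Aᵀ + ε Q̃ E₁ᵀ E₁ Q̃ − Q̃ Hᵀ (JSJᵀ)⁻¹ H Q̃ + (1/ε) D₁ D₁ᵀ + R·G Gᵀ = 0`
with `ε > 0`, then for every `Δ` with `‖Δ‖ ≤ 1` (i.e. `ΔᵀΔ ≤ I`), the perturbed
matrix `A_Δ = A + D₁ Δ E₁` satisfies
`A_Δ Q̃ + Q̃ A_Δᵀ + R·G Gᵀ − Q̃ Hᵀ (JSJᵀ)⁻¹ H Q̃ ≤ 0` in the Loewner order. -/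
theorem stmt16 (n p q : ℕ) (A : Matrix (Fin n) (Fin n) ℝ)
    (D₁ : Matrix (Fin n) (Fin p) ℝ) (E₁ : Matrix (Fin q) (Fin n) ℝ)
    (G : Matrix (Fin n) (Fin 1) ℝ) (H : Matrix (Fin 1) (Fin n) ℝ)
    (R c ε : ℝ) (hR : 0 < R) (hc : 0 < c) (hε : 0 < ε)
    (Q : Matrix (Fin n) (Fin n) ℝ) (hsym : Q.IsSymm) (hpsd : Q.PosSemidef)
    (hric : A * Q + Q * Aᵀ + ε • (Q * E₁ᵀ * E₁ * Q) - c⁻¹ • (Q * Hᵀ * H * Q)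
      + (1 / ε) • (D₁ * D₁ᵀ) + R • (G * Gᵀ) = 0) :
    ∀ Δ : Matrix (Fin p) (Fin q) ℝ,
      ((1 : Matrix (Fin q) (Fin q) ℝ) - Δᵀ * Δ).PosSemidef →
      (-((A + D₁ * Δ * E₁) * Q + Q * (A + D₁ * Δ * E₁)ᵀ + R • (G * Gᵀ)
          - c⁻¹ • (Q * Hᵀ * H * Q))).PosSemidef := by
  intro Δ hΔ
  set a := Real.sqrt (1 / ε) with hadef
  set b := Real.sqrt ε with hbdef
  have hab : a * b = 1 := by
    rw [hadef, hbdef, ← Real.sqrt_mul (by positivity), one_div,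
      inv_mul_cancel₀ hε.ne', Real.sqrt_one]
  have hba : b * a = 1 := by rw [mul_comm]; exact hab
  have ha2 : a * a = 1 / ε := Real.mul_self_sqrt (by positivity)
  have hb2 : b * b = ε := Real.mul_self_sqrt hε.le
  set M : Matrix (Fin n) (Fin p) ℝ := a • D₁ - b • (Q * E₁ᵀ * Δᵀ) with hM
  set N : Matrix (Fin q) (Fin n) ℝ := b • (E₁ * Q) with hN
  have hQ : Qᵀ = Q := hsym
  have key : -((A + D₁ * Δ * E₁) * Q + Q * (A + D₁ * Δ * E₁)ᵀ + R • (G * Gᵀ)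
          - c⁻¹ • (Q * Hᵀ * H * Q))
      = M * Mᵀ + Nᵀ * ((1 : Matrix (Fin q) (Fin q) ℝ) - Δᵀ * Δ) * N := by
    rw [← sub_eq_zero, ← neg_zero, ← hric]
    simp only [hM, hN, Matrix.transpose_add, Matrix.transpose_mul, Matrix.transpose_sub,
      Matrix.transpose_smul, Matrix.transpose_transpose, hQ]
    simp only [Matrix.add_mul, Matrix.mul_add, Matrix.sub_mul, Matrix.mul_sub,
      Matrix.mul_one, Matrix.one_mul, Matrix.smul_mul, Matrix.mul_smul, smul_smul,
      smul_sub, smul_add, mul_assoc, Matrix.mul_assoc, ha2, hb2, hab, hba, one_smul]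
    abel
  rw [key]
  have hMM : (M * Mᵀ).PosSemidef := by
    have := Matrix.posSemidef_self_mul_conjTranspose M
    simpa using this
  have h2 : (Nᵀ * ((1 : Matrix (Fin q) (Fin q) ℝ) - Δᵀ * Δ) * N).PosSemidef := by
    have := hΔ.conjTranspose_mul_mul_same N
    simpa using this
  exact hMM.add h2
end

section
/- Monotonicity of Riccati solutions in the noise term: if P₁ and P₂ are the stabilizing (symmetric PSD, with A − Pᵢ Hᵀ(JSJᵀ)⁻¹H Hurwitz) solutions of A P + P Aᵀ + Qᵢ − P Hᵀ(JSJᵀ)⁻¹H P = 0 for symmetric matrices Q₁ ≤ Q₂ (Loewner order), then P₁ ≤ P₂. -/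
/-!
Write `Δ = P₂ - P₁` and `A₂ = A - c⁻¹ P₂ Hᵀ H`. Subtracting the two Riccati equations gives the
Lyapunov equation `A₂ Δ + Δ A₂ᵀ = -W` with `W = (Q₂ - Q₁) + c⁻¹ (H Δ)ᵀ (H Δ) ⪰ 0`. Along
`w(t) = exp (t A₂ᵀ) x` the quadratic form `w ⬝ Δ w` has derivative `-w ⬝ W w ≤ 0`, and it tends
to `0` because `A₂` is Hurwitz; hence `x ⬝ Δ x ≥ 0`. The decay of `exp (t A₂ᵀ) x` comes from
the generalized eigenspace decomposition of the complexified matrix.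
-/

open Matrix NormedSpace Filter Topology
open scoped Nat

theorem tendsto_cexp_mul_mul_pow_atTop {μ : ℂ} (hμ : μ.re < 0) (j : ℕ) :
    Tendsto (fun t : ℝ => Complex.exp (t * μ) * (t : ℂ) ^ j) atTop (𝓝 0) := by
  rw [tendsto_zero_iff_norm_tendsto_zero]
  refine (tendsto_rpow_mul_exp_neg_mul_atTop_nhds_zero j (-μ.re) (by linarith)).congr' ?_
  filter_upwards [eventually_ge_atTop 0] with t ht
  simp [Complex.norm_exp, abs_of_nonneg ht, mul_comm]

section Fintype

variable {ι : Type*} [Fintype ι]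

theorem HasDerivAt.dotProduct {𝕜 : Type*} [NontriviallyNormedField 𝕜] {f g : 𝕜 → ι → 𝕜}
    {f' g' : ι → 𝕜} {t : 𝕜} (hf : HasDerivAt f f' t) (hg : HasDerivAt g g' t) :
    HasDerivAt (fun s => f s ⬝ᵥ g s) (f' ⬝ᵥ g t + f t ⬝ᵥ g') t := by
  simp only [_root_.dotProduct, ← Finset.sum_add_distrib]
  exact HasDerivAt.fun_sum fun i _ => (hasDerivAt_pi.1 hf i).mul (hasDerivAt_pi.1 hg i)

theorem HasDerivAt.const_mulVec {𝕜 κ : Type*} [NontriviallyNormedField 𝕜] (M : Matrix κ ι 𝕜)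
    {f : 𝕜 → ι → 𝕜} {f' : ι → 𝕜} {t : 𝕜} (hf : HasDerivAt f f' t) :
    HasDerivAt (fun s => M *ᵥ f s) (M *ᵥ f') t :=
  hasDerivAt_pi.2 fun i => by simpa [mulVec] using (hasDerivAt_const t (M i)).dotProduct hf

theorem Matrix.lyapunov_eq_of_riccati {R : Type*} [CommRing R] {A G Q₁ Q₂ P₁ P₂ : Matrix ι ι R}
    (hG : G.IsSymm) (hP₂ : P₂.IsSymm)
    (h₁ : A * P₁ + P₁ * Aᵀ + Q₁ - P₁ * G * P₁ = 0)
    (h₂ : A * P₂ + P₂ * Aᵀ + Q₂ - P₂ * G * P₂ = 0) :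
    (A - P₂ * G) * (P₂ - P₁) + (P₂ - P₁) * (A - P₂ * G)ᵀ =
      -((Q₂ - Q₁) + (P₂ - P₁) * G * (P₂ - P₁)) := by
  rw [transpose_sub, transpose_mul, hG.eq, hP₂.eq, eq_neg_iff_add_eq_zero]
  calc _ = (A * P₂ + P₂ * Aᵀ + Q₂ - P₂ * G * P₂) - (A * P₁ + P₁ * Aᵀ + Q₁ - P₁ * G * P₁) := by
        noncomm_ring
    _ = 0 := by rw [h₁, h₂, sub_zero]

variable [DecidableEq ι]

theorem Matrix.spectrum_transpose {R : Type*} [CommRing R] (M : Matrix ι ι R) :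
    spectrum R Mᵀ = spectrum R M := by
  ext z
  rw [spectrum.mem_iff, spectrum.mem_iff, ← isUnit_transpose, transpose_sub,
    transpose_transpose, Algebra.algebraMap_eq_smul_one, transpose_smul, transpose_one]

section Exp

open scoped Matrix.Norms.Operator

theorem Matrix.exp_smul_mulVec_of_pow_mulVec_eq_zero (M : Matrix ι ι ℂ) (μ t : ℂ) {k : ℕ}
    {v : ι → ℂ} (hv : (M - μ • 1) ^ k *ᵥ v = 0) :
    exp (t • M) *ᵥ v =
      ∑ j ∈ Finset.range k, (Complex.exp (t * μ) * t ^ j / j !) • ((M - μ • 1) ^ j *ᵥ v) := by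
  set N := M - μ • 1
  have hsplit : exp (t • M) = Complex.exp (t * μ) • exp (t • N) := by
    have : t • M = algebraMap ℂ _ (t * μ) + t • N := by
      rw [Algebra.algebraMap_eq_smul_one, smul_sub, mul_smul]
      abel
    rw [this, Matrix.exp_add_of_commute _ _ (Algebra.commute_algebraMap_left _ _)]
    -- `erw`: `algebraMap_exp_comm` carries the operator-norm instances on matrices
    erw [← algebraMap_exp_comm, ← Complex.exp_eq_exp_ℂ]
    exact (Algebra.smul_def _ _).symm
  have hseries : HasSum (fun j => ((j ! : ℂ)⁻¹ • (t • N) ^ j) *ᵥ v) (exp (t • N) *ᵥ v) :=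
    (exp_series_hasSum_exp' (𝕂 := ℂ) (t • N)).map (mulVec.addMonoidHomLeft v)
      (continuous_id.matrix_mulVec continuous_const)
  have htrunc : exp (t • N) *ᵥ v = ∑ j ∈ Finset.range k, ((j ! : ℂ)⁻¹ • (t • N) ^ j) *ᵥ v := by
    refine hseries.unique (hasSum_sum_of_ne_finset_zero fun j hj => ?_)
    obtain ⟨m, rfl⟩ := Nat.exists_eq_add_of_le (not_lt.1 (Finset.mem_range.not.1 hj))
    rw [smul_pow, add_comm, pow_add N, smul_mulVec, smul_mulVec, ← mulVec_mulVec, hv,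
      mulVec_zero, smul_zero, smul_zero]
  rw [hsplit, smul_mulVec, htrunc, Finset.smul_sum]
  refine Finset.sum_congr rfl fun j _ => ?_
  rw [smul_pow, smul_mulVec, smul_mulVec, smul_smul, smul_smul]
  congr 1
  ring

theorem Matrix.exp_smul_map_ofReal (B : Matrix ι ι ℝ) (t : ℝ) :
    exp ((t : ℂ) • B.map (algebraMap ℝ ℂ)) = (exp (t • B)).map (algebraMap ℝ ℂ) := by
  have hφ : Continuous ((algebraMap ℝ ℂ).mapMatrix : Matrix ι ι ℝ →+* Matrix ι ι ℂ) :=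
    continuous_id.matrix_map Complex.continuous_ofReal
  have hsmul : (t : ℂ) • B.map (algebraMap ℝ ℂ) = (algebraMap ℝ ℂ).mapMatrix (t • B) := by
    ext i j
    simp
  rw [hsmul, ← RingHom.mapMatrix_apply]
  exact (map_exp _ hφ (t • B)).symm

theorem Matrix.hasDerivAt_exp_smul_mulVec (B : Matrix ι ι ℝ) (x : ι → ℝ) (t : ℝ) :
    HasDerivAt (fun s : ℝ => exp (s • B) *ᵥ x) (B *ᵥ (exp (t • B) *ᵥ x)) t := by
  let L : Matrix ι ι ℝ →L[ℝ] ι → ℝ := ((mulVecBilin ℝ ℝ).flip x).toContinuousLinearMap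
  rw [mulVec_mulVec]
  exact L.hasFDerivAt.comp_hasDerivAt t (hasDerivAt_exp_smul_const' B t)

end Exp

theorem Matrix.tendsto_exp_smul_mulVec_atTop_of_re_neg {M : Matrix ι ι ℂ}
    (hM : ∀ z ∈ spectrum ℂ M, z.re < 0) (v : ι → ℂ) :
    Tendsto (fun t : ℝ => exp ((t : ℂ) • M) *ᵥ v) atTop (𝓝 0) := by
  have hv : v ∈ ⨆ μ, Module.End.maxGenEigenspace (toLin' M) μ := by
    rw [Module.End.iSup_maxGenEigenspace_eq_top]; trivial
  induction hv using Submodule.iSup_induction' with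
  | mem μ x hx =>
    rcases eq_or_ne x 0 with rfl | hx0
    · simp
    have hμ : μ.re < 0 := hM μ <| by
      rw [← spectrum_toLin']
      exact Module.End.HasEigenvalue.mem_spectrum <|
        Module.End.HasUnifEigenvalue.lt zero_lt_one ((Submodule.ne_bot_iff _).2 ⟨x, hx, hx0⟩)
    obtain ⟨k, hk⟩ := (Module.End.mem_maxGenEigenspace _ _ _).1 hx
    have hk' : (M - μ • 1) ^ k *ᵥ x = 0 := by
      rw [← toLinAlgEquiv'_apply, map_pow, map_sub, map_smul, map_one]
      exact hk
    simp_rw [exp_smul_mulVec_of_pow_mulVec_eq_zero M μ _ hk']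
    simpa using tendsto_finsetSum (Finset.range k) fun j _ =>
      ((tendsto_cexp_mul_mul_pow_atTop hμ j).div_const (j ! : ℂ)).smul_const
        ((M - μ • 1) ^ j *ᵥ x)
  | zero => simp
  | add x y _ _ hx hy => simpa [mulVec_add] using hx.add hy

def Matrix.IsHurwitz (B : Matrix ι ι ℝ) : Prop :=
  ∀ z ∈ spectrum ℂ (B.map (algebraMap ℝ ℂ)), z.re < 0

theorem Matrix.IsHurwitz.transpose {B : Matrix ι ι ℝ} (hB : B.IsHurwitz) : Bᵀ.IsHurwitz := by
  intro z hz
  rw [transpose_map, spectrum_transpose] at hz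
  exact hB z hz

theorem Matrix.IsHurwitz.tendsto_exp_smul_mulVec {B : Matrix ι ι ℝ} (hB : B.IsHurwitz)
    (x : ι → ℝ) : Tendsto (fun t : ℝ => exp (t • B) *ᵥ x) atTop (𝓝 0) := by
  have hre : Continuous fun w : ι → ℂ => fun i => (w i).re :=
    continuous_pi fun i => Complex.continuous_re.comp (continuous_apply i)
  have := (hre.tendsto 0).comp (tendsto_exp_smul_mulVec_atTop_of_re_neg hB (fun i => (x i : ℂ)))
  have hcoe (Y : Matrix ι ι ℝ) (i : ι) :
      (Y.map (algebraMap ℝ ℂ) *ᵥ fun i => (x i : ℂ)) i = (Y *ᵥ x) i :=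
    (RingHom.map_mulVec _ Y x i).symm
  simp only [Function.comp_def, exp_smul_map_ofReal, hcoe, Complex.ofReal_re] at this
  exact this

theorem Matrix.IsHurwitz.posSemidef_of_lyapunov {B X W : Matrix ι ι ℝ} (hB : B.IsHurwitz)
    (hX : X.IsSymm) (hW : W.PosSemidef) (h : B * X + X * Bᵀ = -W) : X.PosSemidef := by
  refine .of_dotProduct_mulVec_nonneg (isHermitian_iff_isSymm.2 hX) fun x => ?_
  rw [star_trivial]
  set w : ℝ → ι → ℝ := fun t => exp (t • Bᵀ) *ᵥ x
  set g : ℝ → ℝ := fun t => w t ⬝ᵥ X *ᵥ w t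
  have hg (t : ℝ) : HasDerivAt g (-(w t ⬝ᵥ W *ᵥ w t)) t := by
    have hw := hasDerivAt_exp_smul_mulVec Bᵀ x t
    refine (hw.dotProduct (hw.const_mulVec X)).congr_deriv ?_
    rw [← dotProduct_neg, ← neg_mulVec, ← h, add_mulVec, dotProduct_add, ← mulVec_mulVec,
      ← mulVec_mulVec, mulVec_transpose, ← dotProduct_mulVec]
  have hanti : Antitone g := antitone_of_hasDerivAt_nonpos hg fun t =>
    neg_nonpos.2 (by simpa using hW.dotProduct_mulVec_nonneg (w t))
  have hq : Continuous fun v : ι → ℝ => v ⬝ᵥ X *ᵥ v :=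
    continuous_id.dotProduct (continuous_const.matrix_mulVec continuous_id)
  have hlim : Tendsto g atTop (𝓝 0) := by
    have := (hq.tendsto 0).comp (hB.transpose.tendsto_exp_smul_mulVec x)
    rwa [zero_dotProduct] at this
  have h0 : g 0 = x ⬝ᵥ X *ᵥ x := by simp [g, w]
  exact h0 ▸ le_of_tendsto hlim (eventually_ge_atTop 0 |>.mono fun t ht => hanti ht)

theorem Matrix.posSemidef_sub_of_riccati {A G Q₁ Q₂ P₁ P₂ : Matrix ι ι ℝ} (hG : G.PosSemidef)
    (hP₁ : P₁.IsSymm) (hP₂ : P₂.IsSymm)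
    (h₁ : A * P₁ + P₁ * Aᵀ + Q₁ - P₁ * G * P₁ = 0)
    (h₂ : A * P₂ + P₂ * Aᵀ + Q₂ - P₂ * G * P₂ = 0)
    (hstab : (A - P₂ * G).IsHurwitz) (hQ : (Q₂ - Q₁).PosSemidef) : (P₂ - P₁).PosSemidef := by
  have hGsymm : G.IsSymm := isHermitian_iff_isSymm.1 hG.isHermitian
  have hΔ : (P₂ - P₁).IsSymm := hP₂.sub hP₁
  have hW : ((Q₂ - Q₁) + (P₂ - P₁) * G * (P₂ - P₁)).PosSemidef := by
    have := hG.conjTranspose_mul_mul_same (P₂ - P₁)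
    rw [conjTranspose_eq_transpose_of_trivial, hΔ.eq] at this
    exact hQ.add this
  exact hstab.posSemidef_of_lyapunov hΔ hW (lyapunov_eq_of_riccati hGsymm hP₂ h₁ h₂)

end Fintype

open Matrix in
theorem stmt19_general (n : ℕ) (A : Matrix (Fin n) (Fin n) ℝ) (H : Matrix (Fin 1) (Fin n) ℝ)
    (c : ℝ) (hc : 0 < c)
    (Q₁ Q₂ P₁ P₂ : Matrix (Fin n) (Fin n) ℝ)
    (hP₁sym : P₁.IsSymm) (hP₂sym : P₂.IsSymm)
    (hric₁ : A * P₁ + P₁ * Aᵀ + Q₁ - c⁻¹ • (P₁ * Hᵀ * H * P₁) = 0)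
    (hric₂ : A * P₂ + P₂ * Aᵀ + Q₂ - c⁻¹ • (P₂ * Hᵀ * H * P₂) = 0)
    (hstab₂ : ∀ z ∈ spectrum ℂ ((A - c⁻¹ • (P₂ * Hᵀ * H)).map (algebraMap ℝ ℂ)), z.re < 0)
    (hQ : (Q₂ - Q₁).PosSemidef) :
    (P₂ - P₁).PosSemidef := by
  set G := c⁻¹ • (Hᵀ * H)
  have hG : G.PosSemidef := by
    simpa [conjTranspose_eq_transpose_of_trivial] using
      (posSemidef_conjTranspose_mul_self H).smul (inv_nonneg.2 hc.le)
  have hPGP (P : Matrix (Fin n) (Fin n) ℝ) : c⁻¹ • (P * Hᵀ * H * P) = P * G * P := by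
    simp [G, Matrix.mul_assoc]
  have hPG : c⁻¹ • (P₂ * Hᵀ * H) = P₂ * G := by
    simp [G, Matrix.mul_assoc]
  rw [hPGP] at hric₁ hric₂
  rw [hPG] at hstab₂
  exact posSemidef_sub_of_riccati hG hP₁sym hP₂sym hric₁ hric₂ hstab₂ hQ

open Matrix in
/-- Monotonicity of stabilizing Riccati solutions in the noise term: if `P₁, P₂`
are symmetric PSD solutions of `A P + P Aᵀ + Qᵢ − P Hᵀ (JSJᵀ)⁻¹ H P = 0`
(`JSJᵀ = c > 0` scalar) that are stabilizing (`A − Pᵢ Hᵀ c⁻¹ H` Hurwitz), and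
`Q₁ ≤ Q₂` in the Loewner order, then `P₁ ≤ P₂`. -/
theorem stmt19 (n : ℕ) (A : Matrix (Fin n) (Fin n) ℝ) (H : Matrix (Fin 1) (Fin n) ℝ)
    (c : ℝ) (hc : 0 < c)
    (Q₁ Q₂ P₁ P₂ : Matrix (Fin n) (Fin n) ℝ)
    (hQ₁ : Q₁.PosSemidef) (hQ₂ : Q₂.PosSemidef)
    (hP₁sym : P₁.IsSymm) (hP₂sym : P₂.IsSymm)
    (hP₁psd : P₁.PosSemidef) (hP₂psd : P₂.PosSemidef)
    (hric₁ : A * P₁ + P₁ * Aᵀ + Q₁ - c⁻¹ • (P₁ * Hᵀ * H * P₁) = 0)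
    (hric₂ : A * P₂ + P₂ * Aᵀ + Q₂ - c⁻¹ • (P₂ * Hᵀ * H * P₂) = 0)
    (hstab₁ : ∀ z ∈ spectrum ℂ ((A - c⁻¹ • (P₁ * Hᵀ * H)).map (algebraMap ℝ ℂ)), z.re < 0)
    (hstab₂ : ∀ z ∈ spectrum ℂ ((A - c⁻¹ • (P₂ * Hᵀ * H)).map (algebraMap ℝ ℂ)), z.re < 0)
    (hQ : (Q₂ - Q₁).PosSemidef) :
    (P₂ - P₁).PosSemidef :=
  stmt19_general n A H c hc Q₁ Q₂ P₁ P₂ hP₁sym hP₂sym hric₁ hric₂ hstab₂ hQ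
end
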